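/- arXiv:2512.20599 — 2 statements merged into one kernel-verified Lean document; each statement's English description precedes it below -/
import Mathlib

section
/- Polynomial method for channel distinguishing (algebraic core of Theorem 4.3): Let d_A, d_B, r, n, M be positive integers. For each x ∈ Fin M, let K x : Fin r → Matrix (Fin d_B) (Fin d_A) ℂ be a family of Kraus operators, and let the channel tensor Φ_x : (Fin d_A × Fin d_A × Fin d_B × Fin d_B) → ℂ be defined by Φ_x (i, i', o, o') = ∑_{k : Fin r} (K x k) o i · conj((K x k) o' i'). Suppose that for each x̂ ∈ Fin M there is an algorithm tensor T x̂ : (Fin n → (Fin d_A × Fin d_A × Fin d_B × Fin d_B)) → ℂ, and define P x̂ x := ∑_{s : Fin n → (Fin d_A × Fin d_A × Fin d_B × Fin d_B)} T x̂ s · ∏_{j : Fin n} Φ_x (s j). Assume that every P x̂ x is real with nonnegative real part, that ∑_{x̂ : Fin M} P x̂ x = 1 for every x, and that Re(P x x) > 1/2 for every x. Then M ≤ (Nat.choose (n + r·d_A·d_B − 1) n)^2. -/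
open scoped BigOperators ComplexConjugate

/-!
The probability `P x̂ x` is a polynomial of degree `n` in the Kraus entries of channel `x`
and `n` in their conjugates. Such a polynomial is a combination of products `m(x) · conj m'(x)`
of two monomials of degree `n` in `r·d_A·d_B` variables, so the matrix `P` factors through a
space of dimension `choose (n + r·d_A·d_B − 1) n ^ 2`. On the other hand `P` is column
stochastic with diagonal entries above `1/2`, hence strictly column diagonally dominant and
invertible, so its rank is `M`.
-/

namespace Matrix

theorem det_ne_zero_of_mem_colStochastic_of_half_lt {m : Type*} [Fintype m] [DecidableEq m]
    {A : Matrix m m ℝ} (hA : A ∈ colStochastic ℝ m) (hdiag : ∀ j, 1 / 2 < A j j) :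
    A.det ≠ 0 := by
  rw [mem_colStochastic_iff_sum] at hA
  obtain ⟨hnonneg, hsum⟩ := hA
  refine det_ne_zero_of_sum_col_lt_diag fun j => ?_
  simp only [Real.norm_of_nonneg (hnonneg _ _)]
  rw [Finset.sum_erase_eq_sub (Finset.mem_univ j), hsum j]
  linarith [hdiag j]

theorem det_ne_zero_of_complex_colStochastic_of_half_lt {m : Type*} [Fintype m] [DecidableEq m]
    (P : Matrix m m ℂ) (hreal : ∀ i j, (P i j).im = 0) (hnonneg : ∀ i j, 0 ≤ (P i j).re)
    (hsum : ∀ j, ∑ i, P i j = 1) (hdiag : ∀ j, 1 / 2 < (P j j).re) : P.det ≠ 0 := by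
  have hA : P.map Complex.re ∈ colStochastic ℝ m := by
    refine mem_colStochastic_iff_sum.mpr ⟨hnonneg, fun j => ?_⟩
    simpa [Complex.re_sum] using congrArg Complex.re (hsum j)
  have hP : P = (P.map Complex.re).map Complex.ofRealHom := by
    ext i j
    exact Complex.ext rfl (hreal i j)
  rw [hP, ← RingHom.mapMatrix_apply, ← RingHom.map_det]
  exact Complex.ofReal_ne_zero.mpr (det_ne_zero_of_mem_colStochastic_of_half_lt hA hdiag)

variable {m ι : Type*} [Fintype ι]

theorem card_le_card_of_det_mul_ne_zero {K : Type*} [Fintype m] [Field K] [DecidableEq m]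
    (B : Matrix m ι K) (C : Matrix ι m K) (h : (B * C).det ≠ 0) :
    Fintype.card m ≤ Fintype.card ι := by
  have hrank : (B * C).rank = Fintype.card m :=
    rank_of_isUnit _ ((isUnit_iff_isUnit_det _).mpr (isUnit_iff_ne_zero.mpr h))
  calc Fintype.card m = (B * C).rank := hrank.symm
    _ ≤ B.rank := rank_mul_le_left B C
    _ ≤ Fintype.card ι := rank_le_card_width B

theorem of_sum_mul_comp_eq_mul {n Q R : Type*} [Fintype Q] [DecidableEq ι] [CommSemiring R]
    (t : m → Q → R) (G : ι → n → R) (g : Q → ι) :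
    of (fun i j => ∑ q, t i q * G (g q) j) =
      of (fun i p => ∑ q with g q = p, t i q) * of G := by
  ext i j
  simp only [mul_apply, of_apply, Finset.sum_mul]
  rw [← Finset.sum_fiberwise Finset.univ g]
  refine Finset.sum_congr rfl fun p _ => Finset.sum_congr rfl fun q hq => ?_
  rw [(Finset.mem_filter.mp hq).2]

end Matrix

namespace Sym

variable {α M : Type*} [CommMonoid M] {n : ℕ}

def monomial (w : α → M) (μ : Sym α n) : M :=
  ((μ : Multiset α).map w).prod

theorem monomial_ofVector_ofFn (w : α → M) (f : Fin n → α) :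
    monomial w (ofVector (List.Vector.ofFn f)) = ∏ j, w (f j) := by
  change ((List.Vector.ofFn f).toList.map w : Multiset M).prod = _
  simp [List.prod_ofFn]

end Sym

theorem prod_sum_mul_conj_eq_sum_monomial {κ X : Type*} [Fintype κ] {n : ℕ}
    (w : κ × X → ℂ) (a b : Fin n → X) :
    ∏ j, ∑ k, w (k, a j) * conj (w (k, b j)) =
      ∑ c : Fin n → κ,
        Sym.monomial w (Sym.ofVector (List.Vector.ofFn fun j => (c j, a j))) *
          conj (Sym.monomial w (Sym.ofVector (List.Vector.ofFn fun j => (c j, b j)))) := by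
  rw [Finset.prod_univ_sum]
  refine Finset.sum_congr rfl fun c _ => ?_
  rw [Finset.prod_mul_distrib, ← map_prod, Sym.monomial_ofVector_ofFn, Sym.monomial_ofVector_ofFn]

theorem polynomial_method_channel_distinguishing_general
    (dA dB r n M : ℕ)
    (K : Fin M → Fin r → Matrix (Fin dB) (Fin dA) ℂ)
    (Φ : Fin M → (Fin dA × Fin dA × Fin dB × Fin dB) → ℂ)
    (hΦ : ∀ (x : Fin M) (i i' : Fin dA) (o o' : Fin dB),
      Φ x (i, i', o, o') = ∑ k : Fin r, (K x k) o i * conj ((K x k) o' i'))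
    (T : Fin M → ((Fin n → (Fin dA × Fin dA × Fin dB × Fin dB)) → ℂ))
    (P : Fin M → Fin M → ℂ)
    (hP : ∀ xh x : Fin M,
      P xh x = ∑ s : Fin n → (Fin dA × Fin dA × Fin dB × Fin dB),
        T xh s * ∏ j : Fin n, Φ x (s j))
    (hreal : ∀ xh x : Fin M, (P xh x).im = 0)
    (hnonneg : ∀ xh x : Fin M, 0 ≤ (P xh x).re)
    (hsum : ∀ x : Fin M, ∑ xh : Fin M, P xh x = 1)
    (hdiag : ∀ x : Fin M, 1 / 2 < (P x x).re) :
    M ≤ (Nat.choose (n + r * dA * dB - 1) n) ^ 2 := by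
  classical
  let w (x : Fin M) : Fin r × Fin dB × Fin dA → ℂ := fun e => K x e.1 e.2.1 e.2.2
  let G (p : Sym (Fin r × Fin dB × Fin dA) n × Sym (Fin r × Fin dB × Fin dA) n) (x : Fin M) :
      ℂ := Sym.monomial (w x) p.1 * conj (Sym.monomial (w x) p.2)
  -- for `q = (s, κ)` with `s j = (i, i', o, o')`: the multisets of the `(κ j, o, i)`
  -- and of the `(κ j, o', i')`
  let g (q : (Fin n → Fin dA × Fin dA × Fin dB × Fin dB) × (Fin n → Fin r)) :=
    (Sym.ofVector (List.Vector.ofFn fun j => (q.2 j, (q.1 j).2.2.1, (q.1 j).1)),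
      Sym.ofVector (List.Vector.ofFn fun j => (q.2 j, (q.1 j).2.2.2, (q.1 j).2.1)))
  have hfactor : Matrix.of P = Matrix.of fun xh x => ∑ q, T xh q.1 * G (g q) x := by
    ext xh x
    simp only [Matrix.of_apply, hP, Fintype.sum_prod_type, ← Finset.mul_sum]
    refine Finset.sum_congr rfl fun s _ => congrArg _ ?_
    exact (Finset.prod_congr rfl fun j _ =>
      hΦ x (s j).1 (s j).2.1 (s j).2.2.1 (s j).2.2.2).trans
      (prod_sum_mul_conj_eq_sum_monomial (w x) (fun j => ((s j).2.2.1, (s j).1))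
        (fun j => ((s j).2.2.2, (s j).2.1)))
  have hdet := Matrix.det_ne_zero_of_complex_colStochastic_of_half_lt
    (Matrix.of P) hreal hnonneg hsum hdiag
  rw [hfactor, Matrix.of_sum_mul_comp_eq_mul] at hdet
  calc M = Fintype.card (Fin M) := (Fintype.card_fin M).symm
    _ ≤ _ := Matrix.card_le_card_of_det_mul_ne_zero _ _ hdet
    _ = (Nat.choose (n + r * dA * dB - 1) n) ^ 2 := by
      simp only [Fintype.card_prod, Sym.card_sym_eq_choose, Fintype.card_fin, sq]
      rw [← mul_assoc, Nat.mul_right_comm r dB, Nat.add_comm]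

/-- **Polynomial method for channel distinguishing** (algebraic core of Theorem 4.3).
Any quantum algorithm (even with indefinite causal order) making `n` queries to a
channel with `r` Kraus operators produces measurement probabilities that are
contractions of an algorithm tensor with `n` copies of the channel tensor; if these
probabilities form a column-stochastic confusion matrix whose diagonal entries all
exceed `1/2`, then `M ≤ (choose (n + r·d_A·d_B − 1) n)^2`. -/
theorem polynomial_method_channel_distinguishing
    (dA dB r n M : ℕ) (hdA : 0 < dA) (hdB : 0 < dB) (hr : 0 < r) (hn : 0 < n)
    (hM : 0 < M)
    (K : Fin M → Fin r → Matrix (Fin dB) (Fin dA) ℂ)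
    (Φ : Fin M → (Fin dA × Fin dA × Fin dB × Fin dB) → ℂ)
    (hΦ : ∀ (x : Fin M) (i i' : Fin dA) (o o' : Fin dB),
      Φ x (i, i', o, o') = ∑ k : Fin r, (K x k) o i * conj ((K x k) o' i'))
    (T : Fin M → ((Fin n → (Fin dA × Fin dA × Fin dB × Fin dB)) → ℂ))
    (P : Fin M → Fin M → ℂ)
    (hP : ∀ xh x : Fin M,
      P xh x = ∑ s : Fin n → (Fin dA × Fin dA × Fin dB × Fin dB),
        T xh s * ∏ j : Fin n, Φ x (s j))
    (hreal : ∀ xh x : Fin M, (P xh x).im = 0)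
    (hnonneg : ∀ xh x : Fin M, 0 ≤ (P xh x).re)
    (hsum : ∀ x : Fin M, ∑ xh : Fin M, P xh x = 1)
    (hdiag : ∀ x : Fin M, 1 / 2 < (P x x).re) :
    M ≤ (Nat.choose (n + r * dA * dB - 1) n) ^ 2 :=
  polynomial_method_channel_distinguishing_general dA dB r n M K Φ hΦ T P hP hreal hnonneg hsum
    hdiag
end

section
/- Lemma 4.8 (binomial coefficient bound via the bosonic entropy function): Let n and d be natural numbers with n ≥ 1 and d ≥ 2, and let c > 0 be a real number. If Real.logb 2 (Nat.choose (n + d − 1) n) ≥ c · (d − 1), then, setting x := (n : ℝ) / (d − 1), it holds that g(x) ≥ c, where g is the bosonic entropy function g(x) = (1 + x) · Real.logb 2 (1 + x) − x · Real.logb 2 x. -/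
/-- The bosonic entropy function `g(x) = (1 + x)·logb₂(1 + x) − x·logb₂(x)`. -/
noncomputable def bosonicEntropy (x : ℝ) : ℝ :=
  (1 + x) * Real.logb 2 (1 + x) - x * Real.logb 2 x

/-!
The term `n^n k^k C(n+k, n)` of the binomial expansion of `(n+k)^(n+k)` shows
`C(n+k, n) ≤ (n+k)^(n+k) / (n^n k^k)`, and `log₂` of the right-hand side is exactly
`k · g(n/k)`. Apply this with `k = d - 1`.
-/

open Real

theorem Nat.choose_mul_pow_mul_pow_le (m n : ℕ) :
    (m + n).choose m * m ^ m * n ^ n ≤ (m + n) ^ (m + n) := by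
  have hm : m ∈ Finset.range (m + n + 1) := Finset.mem_range.2 (by omega)
  calc (m + n).choose m * m ^ m * n ^ n
      = m ^ m * n ^ (m + n - m) * (m + n).choose m := by rw [Nat.add_sub_cancel_left]; ring
    _ ≤ ∑ k ∈ Finset.range (m + n + 1), m ^ k * n ^ (m + n - k) * (m + n).choose k :=
      Finset.single_le_sum (f := fun k => m ^ k * n ^ (m + n - k) * (m + n).choose k)
        (fun _ _ => Nat.zero_le _) hm
    _ = (m + n) ^ (m + n) := (add_pow _ _ _).symm

theorem Real.logb_choose_le {b : ℝ} (hb : 1 < b) (m n : ℕ) :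
    logb b ((m + n).choose m) ≤ (m + n) * logb b (m + n) - m * logb b m - n * logb b n := by
  have hpow (k : ℕ) : (0 : ℝ) < (k : ℝ) ^ k := by exact_mod_cast Nat.pow_self_pos
  have hchoose : (0 : ℝ) < (m + n).choose m := by
    exact_mod_cast Nat.choose_pos (Nat.le_add_right m n)
  have hprod : (m + n).choose m * (m : ℝ) ^ m * (n : ℝ) ^ n ≤ ((m + n : ℕ) : ℝ) ^ (m + n) := by
    exact_mod_cast Nat.choose_mul_pow_mul_pow_le m n
  have hlog := logb_le_logb_of_le hb (mul_pos (mul_pos hchoose (hpow m)) (hpow n)) hprod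
  rw [logb_mul (mul_pos hchoose (hpow m)).ne' (hpow n).ne', logb_mul hchoose.ne' (hpow m).ne',
    logb_pow, logb_pow, logb_pow] at hlog
  push_cast at hlog
  linarith

theorem mul_bosonicEntropy_div {x y : ℝ} (hx : 0 < x) (hy : 0 < y) :
    y * bosonicEntropy (x / y) = (x + y) * logb 2 (x + y) - x * logb 2 x - y * logb 2 y := by
  have hsum : 1 + x / y = (x + y) / y := by field_simp; ring
  rw [bosonicEntropy, hsum, logb_div (by positivity) hy.ne', logb_div hx.ne' hy.ne']
  field_simp
  ring

theorem bosonicEntropy_ge_of_logb_choose_ge_general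
    (n d : ℕ) (hn : 1 ≤ n) (hd : 2 ≤ d) (c : ℝ)
    (h : c * ((d : ℝ) - 1) ≤ Real.logb 2 (Nat.choose (n + d - 1) n)) :
    c ≤ bosonicEntropy ((n : ℝ) / ((d : ℝ) - 1)) := by
  obtain ⟨k, rfl⟩ : ∃ k, d = k + 1 := ⟨d - 1, by omega⟩
  have hk : (0 : ℝ) < k := by exact_mod_cast (by omega : 0 < k)
  rw [Nat.cast_succ, add_sub_cancel_right] at h ⊢
  rw [← Nat.add_assoc, Nat.add_sub_cancel] at h
  refine le_of_mul_le_mul_left ?_ hk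
  calc k * c = c * k := mul_comm _ _
    _ ≤ logb 2 ((n + k).choose n) := h
    _ ≤ (n + k) * logb 2 (n + k) - n * logb 2 n - k * logb 2 k := logb_choose_le one_lt_two n k
    _ = k * bosonicEntropy (n / k) := (mul_bosonicEntropy_div (by exact_mod_cast hn) hk).symm

/-- **Lemma 4.8** (binomial coefficient bound via the bosonic entropy function):
if `logb₂ (choose (n + d − 1) n) ≥ c·(d − 1)` with `n ≥ 1`, `d ≥ 2` and `c > 0`,
then `g(n / (d − 1)) ≥ c` where `g` is the bosonic entropy function. -/
theorem bosonicEntropy_ge_of_logb_choose_ge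
    (n d : ℕ) (hn : 1 ≤ n) (hd : 2 ≤ d) (c : ℝ) (hc : 0 < c)
    (h : c * ((d : ℝ) - 1) ≤ Real.logb 2 (Nat.choose (n + d - 1) n)) :
    c ≤ bosonicEntropy ((n : ℝ) / ((d : ℝ) - 1)) :=
  bosonicEntropy_ge_of_logb_choose_ge_general n d hn hd c h
end
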